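/- arXiv:2504.16863 — 2 statements merged into one kernel-verified Lean document; each statement's English description precedes it below -/
import Mathlib

section
/- For every graph G, the clique-degree of G is at most ω̃(G) · (cideg(G) − 1), where the clique-degree cdeg(G) is the maximum number of other maximal cliques that intersect a fixed maximal clique of G. -/
variable {V : Type} {W : Type}

/-- Two vertices are true twins: they have the same closed neighbourhood. -/
def twin (G : SimpleGraph V) (x y : V) : Prop :=
  ∀ z, (G.Adj x z ∨ x = z) ↔ (G.Adj y z ∨ y = z)

/-- The true-twin relation as a setoid. -/
def twinSetoid (G : SimpleGraph V) : Setoid V :=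
  ⟨twin G, ⟨fun _ _ => Iff.rfl, fun h z => (h z).symm, fun h1 h2 z => (h1 z).trans (h2 z)⟩⟩

/-- The quotient of `G` by the true-twin relation. -/
def quotGraph (G : SimpleGraph V) : SimpleGraph (Quotient (twinSetoid G)) where
  Adj a b := a ≠ b ∧ ∃ x y, Quotient.mk (twinSetoid G) x = a ∧
    Quotient.mk (twinSetoid G) y = b ∧ G.Adj x y
  symm := ⟨by
    rintro a b ⟨h, x, y, hx, hy, hxy⟩
    exact ⟨h.symm, y, x, hy, hx, hxy.symm⟩⟩
  loopless := ⟨by rintro a ⟨h, _⟩; exact h rfl⟩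

/-- The true-twin class of a vertex. -/
def qmk (G : SimpleGraph V) (v : V) : Quotient (twinSetoid G) :=
  Quotient.mk (twinSetoid G) v

/-- `K` is a maximal clique of `G`. -/
def MaxClique (G : SimpleGraph V) (K : Set V) : Prop :=
  G.IsClique K ∧ ∀ K', G.IsClique K' → K ⊆ K' → K' = K

/-- `S` is an independent set of `G`. -/
def IndepSet (G : SimpleGraph V) (S : Set V) : Prop :=
  ∀ x ∈ S, ∀ y ∈ S, ¬ G.Adj x y

/-- Independence number. -/
noncomputable def indepNum (G : SimpleGraph V) : ℕ :=
  sSup {n | ∃ S : Set V, IndepSet G S ∧ S.ncard = n}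

/-- Clique cover number: minimum number of cliques covering all vertices. -/
noncomputable def cliqueCoverNum (G : SimpleGraph V) : ℕ :=
  sInf {n | ∃ f : Fin n → Set V, (∀ i, G.IsClique (f i)) ∧ ∀ v, ∃ i, v ∈ f i}

/-- Closed neighbourhood. -/
def cNbhd (G : SimpleGraph V) (v : V) : Set V := insert v (G.neighborSet v)

/-- Local independence number. -/
noncomputable def alphaLoc (G : SimpleGraph V) : ℕ :=
  sSup {n | ∃ v, ∃ S ⊆ cNbhd G v, IndepSet G S ∧ S.ncard = n}

/-- Local clique cover number. -/
noncomputable def thetaLoc (G : SimpleGraph V) : ℕ :=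
  sSup {n | ∃ v, cliqueCoverNum (G.induce (cNbhd G v)) = n}

/-- Clique-incidence-degree: max number of maximal cliques containing a vertex. -/
noncomputable def cideg (G : SimpleGraph V) : ℕ :=
  sSup {n | ∃ v, {K | MaxClique G K ∧ v ∈ K}.ncard = n}

/-- Clique-incidence-diversity: max number of true-twin classes meeting a maximal clique. -/
noncomputable def cliqueIncDiv (G : SimpleGraph V) : ℕ :=
  sSup {n | ∃ K, MaxClique G K ∧ (qmk G '' K).ncard = n}

/-- Clique-degree: max number of other maximal cliques intersecting a maximal clique. -/
noncomputable def cdeg (G : SimpleGraph V) : ℕ :=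
  sSup {n | ∃ K, MaxClique G K ∧ {K' | MaxClique G K' ∧ K' ≠ K ∧ (K' ∩ K).Nonempty}.ncard = n}

/-- Maximum degree. -/
noncomputable def maxDeg (H : SimpleGraph W) : ℕ :=
  sSup {n | ∃ v, (H.neighborSet v).ncard = n}

/-- Clique number. -/
noncomputable def cliqueNum (H : SimpleGraph W) : ℕ :=
  sSup {n | ∃ K : Set W, H.IsClique K ∧ K.ncard = n}

/-- A separation of a graph. -/
def IsSep (H : SimpleGraph W) (A B : Set W) : Prop :=
  A ∪ B = Set.univ ∧ ∀ a ∈ A \ B, ∀ b ∈ B \ A, ¬ H.Adj a b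

/-- A tree-decomposition. -/
structure TreeDec {ι : Type} (G : SimpleGraph V) (T : SimpleGraph ι) (β : ι → Set V) : Prop where
  tree : T.IsTree
  cover : ∀ v, ∃ t, v ∈ β t
  edges : ∀ v w, G.Adj v w → ∃ t, v ∈ β t ∧ w ∈ β t
  subtree : ∀ v, (T.induce {t | v ∈ β t}).Connected

/-- α-treewidth (tree-independence number). -/
noncomputable def alphaTW (G : SimpleGraph V) : ℕ :=
  sInf {n | ∃ (ι : Type) (T : SimpleGraph ι) (β : ι → Set V), TreeDec G T β ∧
    ∀ t, ∀ S ⊆ β t, IndepSet G S → S.ncard ≤ n}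

/-- Neighbourhood of a set of vertices (outside the set). -/
def setNbhd (G : SimpleGraph V) (K : Set V) : Set V :=
  {v | v ∉ K ∧ ∃ x ∈ K, G.Adj v x}

/-- Diversity number of a set `K`: max size of a `K`-diverse set of neighbours. -/
noncomputable def dn (G : SimpleGraph V) (K : Set V) : ℕ :=
  sSup {n | ∃ Y ⊆ setNbhd G K,
    (∀ y1 ∈ Y, ∀ y2 ∈ Y, y1 ≠ y2 → G.neighborSet y1 ∩ K ≠ G.neighborSet y2 ∩ K) ∧ Y.ncard = n}

/-- Cutrank of a set of vertices: F₂-rank of the corresponding submatrix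
of the adjacency matrix. -/
noncomputable def cutrank (G : SimpleGraph V) [Fintype V] (X : Set V) : ℕ :=
  haveI : DecidableRel G.Adj := Classical.decRel _
  haveI : Fintype ↥X := Fintype.ofFinite _
  haveI : Fintype ↥(Xᶜ) := Fintype.ofFinite _
  (Matrix.of fun (x : ↥X) (y : ↥(Xᶜ)) => if G.Adj x.1 y.1 then (1 : ZMod 2) else 0).rank

/-- `G` admits a rank-decomposition of width at most `w`: a tree whose internal
nodes have degree 3, whose leaves are in bijection with `V(G)`, such that every
edge induces a bipartition of the vertices of cutrank at most `w`. -/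
def HasRankDecompOfWidth (G : SimpleGraph V) [Fintype V] (w : ℕ) : Prop :=
  ∃ (ι : Type) (T : SimpleGraph ι) (δ : V → ι),
    T.IsTree ∧ Function.Injective δ ∧
    (∀ t, (T.neighborSet t).ncard = 1 ↔ ∃ v, δ v = t) ∧
    (∀ t, (T.neighborSet t).ncard = 1 ∨ (T.neighborSet t).ncard = 3) ∧
    ∀ a b, T.Adj a b → cutrank G {v | (T.deleteEdges {s(a,b)}).Reachable (δ v) a} ≤ w

/-- An injective enumeration of a path that is induced in `G`. -/
def IsInducedPath (G : SimpleGraph V) {ℓ : ℕ} (x : Fin ℓ → V) : Prop :=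
  Function.Injective x ∧ ∀ i j, G.Adj (x i) (x j) ↔ (i.val + 1 = j.val ∨ j.val + 1 = i.val)

/-! A maximal clique is closed under true twins, so a maximal clique `K'` meeting the maximal
clique `K` contains the chosen representative of some twin class meeting `K`. Hence the maximal
cliques `K' ≠ K` meeting `K` are covered by at most `ω̃(G)` families, the maximal cliques other
than `K` through one such representative, and each family has at most `cideg G - 1` members. -/

theorem Set.Finite.ncard_biUnion_le_ncard_mul {α ι : Type*} {t : Set ι} (ht : t.Finite)
    {f : ι → Set α} {m : ℕ} (hf : ∀ i ∈ t, (f i).ncard ≤ m) :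
    (⋃ i ∈ t, f i).ncard ≤ t.ncard * m := by
  lift t to Finset ι using ht
  simpa using (t.set_ncard_biUnion_le f).trans (Finset.sum_le_card_nsmul _ _ _ hf)

def maxCliquesThrough (G : SimpleGraph V) (v : V) : Set (Set V) :=
  {K | MaxClique G K ∧ v ∈ K}

section

variable {G : SimpleGraph V}

theorem MaxClique.mem_of_twin {K : Set V} (hK : MaxClique G K) {x y : V} (hx : x ∈ K)
    (hxy : twin G x y) : y ∈ K := by
  have hclique : G.IsClique (insert y K) :=
    hK.1.insert fun b hb hby =>
      ((hxy b).1 (or_iff_not_imp_right.2 (hK.1 hx hb))).resolve_right hby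
  exact hK.2 _ hclique (Set.subset_insert y K) ▸ Set.mem_insert y K

theorem MaxClique.out_qmk_mem {K : Set V} (hK : MaxClique G K) {x : V} (hx : x ∈ K) :
    (qmk G x).out ∈ K :=
  hK.mem_of_twin hx (Quotient.exact (Quotient.out_eq (qmk G x)).symm)

variable [Finite V]

theorem ncard_maxCliquesThrough_le_cideg (v : V) : (maxCliquesThrough G v).ncard ≤ cideg G :=
  le_csSup ⟨Nat.card (Set V), by rintro _ ⟨w, rfl⟩; exact Set.ncard_le_card _⟩ ⟨v, rfl⟩

theorem ncard_image_qmk_le_cliqueIncDiv {K : Set V} (hK : MaxClique G K) :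
    (qmk G '' K).ncard ≤ cliqueIncDiv G :=
  le_csSup ⟨Nat.card (Quotient (twinSetoid G)), by
    rintro _ ⟨K', -, rfl⟩
    exact Set.ncard_le_card _⟩ ⟨K, hK, rfl⟩

theorem ncard_maxCliquesThrough_sdiff_singleton_le {K : Set V} (hK : MaxClique G K) {v : V}
    (hv : v ∈ K) :
    (maxCliquesThrough G v \ {K}).ncard ≤ cideg G - 1 := by
  rw [Set.ncard_sdiff_singleton_of_mem (show K ∈ maxCliquesThrough G v from ⟨hK, hv⟩)]
  exact Nat.sub_le_sub_right (ncard_maxCliquesThrough_le_cideg v) 1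

end

theorem stmt11 [Fintype V] (G : SimpleGraph V) :
    cdeg G ≤ cliqueIncDiv G * (cideg G - 1) := by
  refine csSup_le' ?_
  rintro _ ⟨K, hK, rfl⟩
  have hcover : {K' | MaxClique G K' ∧ K' ≠ K ∧ (K' ∩ K).Nonempty} ⊆
      ⋃ q ∈ qmk G '' K, maxCliquesThrough G q.out \ {K} := by
    rintro K' ⟨hK', hne, x, hxK', hxK⟩
    exact Set.mem_biUnion (Set.mem_image_of_mem _ hxK) ⟨⟨hK', hK'.out_qmk_mem hxK'⟩, hne⟩
  calc _ ≤ (⋃ q ∈ qmk G '' K, maxCliquesThrough G q.out \ {K}).ncard :=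
        Set.ncard_le_ncard hcover (Set.toFinite _)
    _ ≤ (qmk G '' K).ncard * (cideg G - 1) := by
        refine (Set.toFinite _).ncard_biUnion_le_ncard_mul ?_
        rintro _ ⟨x, hx, rfl⟩
        exact ncard_maxCliquesThrough_sdiff_singleton_le hK (hK.out_qmk_mem hx)
    _ ≤ cliqueIncDiv G * (cideg G - 1) :=
        Nat.mul_le_mul_right _ (ncard_image_qmk_le_cliqueIncDiv hK)
end

section
/- Let G be a graph with a tree-decomposition (T, β). Define β̃(t) to be the set of true-twin equivalence classes of vertices of β(t). Then (T, β̃) is a tree-decomposition of the true-twin quotient graph G̃; moreover the α-treewidth of G equals the α-treewidth of G̃. -/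
variable {V : Type} {W : Type}

/-
True twins are adjacent, so an independent set meets each twin class at most once and maps
injectively to an independent set of `G̃`; conversely an independent set of `G̃` lifts to one of `G`
by choosing representatives inside a bag. Hence bags and their images have the same independence
number. Pulling back bags of a decomposition of `G̃` gives a decomposition of `G`; pushing bags
of `G` forward, the nodes whose bags meet a twin class form the union of the subtrees of its
members, which pairwise meet because the members are pairwise adjacent.
-/

section Twins

variable {G : SimpleGraph V}

lemma twin.adj_of_ne {u v : V} (h : twin G u v) (hne : u ≠ v) : G.Adj u v := by
  rcases (h v).mpr (Or.inr rfl) with huv | rfl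
  · exact huv
  · exact absurd rfl hne

lemma qmk_surjective : Function.Surjective (qmk G) :=
  Quotient.mk_surjective

lemma adj_of_qmk_eq_of_ne {u v : V} (h : qmk G u = qmk G v) (hne : u ≠ v) : G.Adj u v :=
  twin.adj_of_ne (Quotient.exact h) hne

lemma quotGraph_adj_qmk {u v : V} :
    (quotGraph G).Adj (qmk G u) (qmk G v) ↔ qmk G u ≠ qmk G v ∧ G.Adj u v := by
  refine ⟨fun ⟨hne, x, y, hxu, hyv, hxy⟩ => ⟨hne, ?_⟩, fun ⟨hne, huv⟩ => ⟨hne, u, v, rfl, rfl, huv⟩⟩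
  rcases (Quotient.exact hxu y).mp (Or.inl hxy) with huy | rfl
  · rcases (Quotient.exact hyv u).mp (Or.inl huy.symm) with hvu | rfl
    · exact hvu.symm
    · exact absurd rfl hne
  · exact absurd hyv hne

lemma qmk_eq_or_adj_of_adj {u v : V} (h : G.Adj u v) :
    qmk G u = qmk G v ∨ (quotGraph G).Adj (qmk G u) (qmk G v) := by
  by_cases huv : qmk G u = qmk G v
  · exact Or.inl huv
  · exact Or.inr (quotGraph_adj_qmk.mpr ⟨huv, h⟩)

end Twins

section IndepSet

variable {G : SimpleGraph V}

lemma IndepSet.image_qmk {S : Set V} (hS : IndepSet G S) : IndepSet (quotGraph G) (qmk G '' S) := by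
  rintro _ ⟨u, hu, rfl⟩ _ ⟨v, hv, rfl⟩ huv
  exact hS u hu v hv (quotGraph_adj_qmk.mp huv).2

lemma IndepSet.injOn_qmk {S : Set V} (hS : IndepSet G S) : Set.InjOn (qmk G) S := by
  intro u hu v hv huv
  by_contra hne
  exact hS u hu v hv (adj_of_qmk_eq_of_ne huv hne)

lemma IndepSet.of_injOn_qmk {S : Set V} (hS : IndepSet (quotGraph G) (qmk G '' S))
    (hinj : Set.InjOn (qmk G) S) : IndepSet G S := by
  intro u hu v hv huv
  have hne : qmk G u ≠ qmk G v := fun h => G.ne_of_adj huv (hinj hu hv h)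
  exact hS _ ⟨u, hu, rfl⟩ _ ⟨v, hv, rfl⟩ (quotGraph_adj_qmk.mpr ⟨hne, huv⟩)

end IndepSet

def AlphaWidthLE {ι : Type} (G : SimpleGraph V) (β : ι → Set V) (n : ℕ) : Prop :=
  ∀ t, ∀ S ⊆ β t, IndepSet G S → S.ncard ≤ n

lemma alphaTW_eq_sInf (G : SimpleGraph V) :
    alphaTW G = sInf {n | ∃ (ι : Type) (T : SimpleGraph ι) (β : ι → Set V),
      TreeDec G T β ∧ AlphaWidthLE G β n} :=
  rfl

namespace AlphaWidthLE

variable {ι : Type} {G : SimpleGraph V} {n : ℕ}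

lemma image_qmk {β : ι → Set V} (hw : AlphaWidthLE G β n) :
    AlphaWidthLE (quotGraph G) (fun t => qmk G '' β t) n := by
  intro t S hS hind
  obtain ⟨S', hS'β, hbij⟩ := Set.SurjOn.exists_bijOn_subset hS
  rw [← hbij.ncard_eq]
  exact hw t S' hS'β (.of_injOn_qmk (hbij.image_eq ▸ hind) hbij.injOn)

lemma preimage_qmk {β : ι → Set (Quotient (twinSetoid G))} (hw : AlphaWidthLE (quotGraph G) β n) :
    AlphaWidthLE G (fun t => qmk G ⁻¹' β t) n := by
  intro t S hS hind
  rw [← hind.injOn_qmk.ncard_image]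
  exact hw t _ (Set.image_subset_iff.mpr hS) hind.image_qmk

end AlphaWidthLE

namespace TreeDec

variable {ι : Type} {T : SimpleGraph ι}

lemma preimage {G : SimpleGraph V} {H : SimpleGraph W} {β : ι → Set W} (h : TreeDec H T β)
    (f : V → W) (hf : ∀ u v, G.Adj u v → f u = f v ∨ H.Adj (f u) (f v)) :
    TreeDec G T (fun t => f ⁻¹' β t) where
  tree := h.tree
  cover v := h.cover (f v)
  edges u v huv := by
    rcases hf u v huv with hfuv | hfuv
    · obtain ⟨t, ht⟩ := h.cover (f u)
      exact ⟨t, ht, show f v ∈ β t from hfuv ▸ ht⟩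
    · exact h.edges _ _ hfuv
  subtree v := h.subtree (f v)

variable {G : SimpleGraph V} {β : ι → Set V}

lemma exists_mem_of_qmk_eq (h : TreeDec G T β) {u v : V} (huv : qmk G u = qmk G v) :
    ∃ t, u ∈ β t ∧ v ∈ β t := by
  by_cases hne : u = v
  · obtain ⟨t, ht⟩ := h.cover u
    exact ⟨t, ht, hne ▸ ht⟩
  · exact h.edges u v (adj_of_qmk_eq_of_ne huv hne)

lemma image_qmk (h : TreeDec G T β) : TreeDec (quotGraph G) T (fun t => qmk G '' β t) where
  tree := h.tree
  cover a := by
    obtain ⟨v, rfl⟩ := qmk_surjective a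
    obtain ⟨t, ht⟩ := h.cover v
    exact ⟨t, v, ht, rfl⟩
  edges a b hab := by
    obtain ⟨_, u, v, rfl, rfl, huv⟩ := hab
    obtain ⟨t, hu, hv⟩ := h.edges u v huv
    exact ⟨t, ⟨u, hu, rfl⟩, ⟨v, hv, rfl⟩⟩
  subtree a := by
    obtain ⟨v, rfl⟩ := qmk_surjective a
    have hunion : {t | qmk G v ∈ qmk G '' β t} =
        ⋃₀ ((fun w => {t | w ∈ β t}) '' {w | qmk G w = qmk G v}) := by
      ext t
      simp [and_comm]
    rw [hunion]
    refine SimpleGraph.induce_sUnion_connected_of_pairwise_not_disjoint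
      ⟨_, v, rfl, rfl⟩ ?_ ?_
    · rintro _ _ ⟨u, hu, rfl⟩ ⟨w, hw, rfl⟩
      exact h.exists_mem_of_qmk_eq (hu.trans hw.symm)
    · rintro _ ⟨w, -, rfl⟩
      exact h.subtree w

lemma preimage_qmk {β : ι → Set (Quotient (twinSetoid G))} (h : TreeDec (quotGraph G) T β) :
    TreeDec G T (fun t => qmk G ⁻¹' β t) :=
  h.preimage (qmk G) fun _ _ => qmk_eq_or_adj_of_adj

end TreeDec

theorem stmt18 {ι : Type} (G : SimpleGraph V) (T : SimpleGraph ι) (β : ι → Set V)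
    (h : TreeDec G T β) :
    TreeDec (quotGraph G) T (fun t => qmk G '' β t) ∧
    alphaTW G = alphaTW (quotGraph G) := by
  refine ⟨h.image_qmk, ?_⟩
  rw [alphaTW_eq_sInf, alphaTW_eq_sInf]
  congr 1
  ext n
  constructor
  · rintro ⟨ι', T', β', hd, hw⟩
    exact ⟨ι', T', _, hd.image_qmk, hw.image_qmk⟩
  · rintro ⟨ι', T', β', hd, hw⟩
    exact ⟨ι', T', _, hd.preimage_qmk, hw.preimage_qmk⟩
end
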